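/- Let G be a simple graph on a finite vertex set V and let i ∈ V. Suppose V = V₁ ∪ V₂ with V₁ ∩ V₂ = {i}, every edge of G has both endpoints in V₁ or both endpoints in V₂, and the induced subgraphs G₁ = G[V₁] and G₂ = G[V₂] are connected graphs on at least 2 vertices (so G = G₁ ⊕_i G₂ is a vertex sum at i). Then ξξ(G,i) = max{ξξ(G₁,i), ξξ(G₂,i)}. -/

import Mathlib

open Matrix

variable {V : Type*} [Fintype V] [DecidableEq V]

/-- The nullity of a real matrix: the dimension of its kernel. -/
noncomputable def nullity (A : Matrix V V ℝ) : ℕ :=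
  Module.finrank ℝ (LinearMap.ker A.mulVecLin)

/-- `delRC A i` is the principal submatrix of `A` obtained by deleting row and column `i`. -/
def delRC (A : Matrix V V ℝ) (i : V) : Matrix {j // j ≠ i} {j // j ≠ i} ℝ :=
  A.submatrix Subtype.val Subtype.val

/-- `A ∈ S(G)`: `A` is symmetric and its off-diagonal entries are nonzero precisely at edges. -/
def InS (G : SimpleGraph V) (A : Matrix V V ℝ) : Prop :=
  A.IsSymm ∧ ∀ j k : V, j ≠ k → (A j k ≠ 0 ↔ G.Adj j k)

/-- The i-strong nullity interlacing property. -/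
def HasSNIP (A : Matrix V V ℝ) (i : V) : Prop :=
  ∀ X : Matrix V V ℝ, X.IsSymm → (∀ j k, A j k * X j k = 0) → (∀ j, X j j = 0) →
    (∀ j k, j ≠ i → (A * X) j k = 0) → X = 0

/-- The Strong Arnold Property. -/
def HasSAP (A : Matrix V V ℝ) : Prop :=
  ∀ X : Matrix V V ℝ, X.IsSymm → (∀ j k, A j k * X j k = 0) → (∀ j, X j j = 0) →
    A * X = 0 → X = 0

/-- The parameter ξξ(G,i): the maximum of k+ℓ over pairs k ≤ ℓ such that (G,i)
allows the nullity pair (k,ℓ) with i-SNIP. -/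
noncomputable def xixi (G : SimpleGraph V) (i : V) : ℕ :=
  sSup {s | ∃ k ℓ : ℕ, k ≤ ℓ ∧ s = k + ℓ ∧ ∃ A : Matrix V V ℝ,
    InS G A ∧ HasSNIP A i ∧ nullity A = k ∧ nullity (delRC A i) = ℓ}

/-!
Write `V = V₁ ⊔ (V₂ \ {i})`. A matrix `A ∈ S(G)` becomes a block matrix `[[P, Q], [Qᵀ, S]]`
with `P = A[V₁]`, `S = A[V₂ \ {i}]`, and `Q` zero outside row `i`. If `S` is invertible, the
Schur complement `P - Q S⁻¹ Qᵀ` differs from `P` only in the entry `(i, i)`. So it lies in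
`S(G₁)`, its nullity is that of `A`, its nullity after deleting `i` is that of `A(i)`, and it has
`i`-SNIP exactly when `A` has. Going back, a matrix for `(G₁, i)` is extended by any invertible
`S ∈ S(G₂ - i)`, with its `(i, i)` entry corrected. Finally, `i`-SNIP of `A` forbids `A[V₁ \ {i}]`
and `A[V₂ \ {i}]` from both being singular. Kernel vectors `u`, `v` of the two blocks would give
the nonzero witness `[[0, u vᵀ], [v uᵀ, 0]]`. So the pairs allowed by `(G, i)` are exactly those
allowed by `(G₁, i)` or by `(G₂, i)`.
-/

section Nullity

variable {m n : Type*} [Fintype m] [Fintype n]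

lemma nullity_add_rank (A : Matrix n n ℝ) : nullity A + A.rank = Fintype.card n := by
  rw [nullity, rank, add_comm, LinearMap.finrank_range_add_finrank_ker,
    Module.finrank_fintype_fun_eq_card]

lemma nullity_le_card (A : Matrix n n ℝ) : nullity A ≤ Fintype.card n :=
  (nullity_add_rank A).le.trans' le_self_add

lemma nullity_submatrix_equiv (A : Matrix n n ℝ) (e : m ≃ n) :
    nullity (A.submatrix e e) = nullity A := by
  have h₁ := nullity_add_rank A
  have h₂ := nullity_add_rank (A.submatrix e e)
  rw [rank_submatrix, Fintype.card_congr e] at h₂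
  omega

lemma nullity_eq_zero_of_isUnit_det [DecidableEq n] {A : Matrix n n ℝ} (h : IsUnit A.det) :
    nullity A = 0 := by
  rw [nullity, LinearMap.ker_eq_bot.mpr (mulVec_injective_iff_isUnit.mpr
    ((isUnit_iff_isUnit_det A).mpr h)), finrank_bot]

lemma finrank_submodule_prod {M N : Type*} [AddCommGroup M] [AddCommGroup N]
    [Module ℝ M] [Module ℝ N] [FiniteDimensional ℝ M] [FiniteDimensional ℝ N]
    (p : Submodule ℝ M) (q : Submodule ℝ N) :
    Module.finrank ℝ (p.prod q) = Module.finrank ℝ p + Module.finrank ℝ q := by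
  let e : p.prod q ≃ₗ[ℝ] p × q :=
    { toFun := fun x => (⟨x.1.1, x.2.1⟩, ⟨x.1.2, x.2.2⟩)
      invFun := fun y => ⟨(y.1, y.2), y.1.2, y.2.2⟩
      map_add' := fun _ _ => rfl
      map_smul' := fun _ _ => rfl
      left_inv := fun _ => rfl
      right_inv := fun _ => rfl }
  rw [e.finrank_eq, Module.finrank_prod]

lemma nullity_fromBlocks_zero (B : Matrix m m ℝ) (C : Matrix n n ℝ) :
    nullity (fromBlocks B 0 0 C) = nullity B + nullity C := by
  let E := LinearEquiv.sumArrowLequivProdArrow m n ℝ ℝ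
  have h : (fromBlocks B 0 0 C).mulVecLin =
      E.symm.toLinearMap ∘ₗ (B.mulVecLin.prodMap C.mulVecLin) ∘ₗ E.toLinearMap := by
    ext x (j | k) <;> simp [fromBlocks_mulVec] <;> rfl
  rw [nullity, h, LinearEquiv.ker_comp, LinearMap.ker_comp, LinearMap.ker_prodMap,
    Submodule.comap_equiv_eq_map_symm, LinearEquiv.finrank_map_eq, finrank_submodule_prod]
  rfl

lemma nullity_fromBlocks_eq_nullity_schur [DecidableEq m] [DecidableEq n] (P : Matrix m m ℝ)
    (Q : Matrix m n ℝ) (R : Matrix n m ℝ) {S : Matrix n n ℝ} (hS : IsUnit S.det) :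
    nullity (fromBlocks P Q R S) = nullity (P - Q * S⁻¹ * R) := by
  have := S.invertibleOfIsUnitDet hS
  have hrank : (fromBlocks P Q R S).rank =
      (fromBlocks (P - Q * S⁻¹ * R) 0 0 S).rank := by
    rw [fromBlocks_eq_of_invertible₂₂ P Q R S, invOf_eq_nonsing_inv,
      rank_mul_eq_left_of_isUnit_det _ _ (by simp),
      rank_mul_eq_right_of_isUnit_det _ _ (by simp)]
  have h₁ := nullity_add_rank (fromBlocks P Q R S)
  have h₂ := nullity_add_rank (fromBlocks (P - Q * S⁻¹ * R) 0 0 S)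
  rw [nullity_fromBlocks_zero, nullity_eq_zero_of_isUnit_det hS] at h₂
  omega

lemma nullity_delRC_submatrix_equiv [DecidableEq m] [DecidableEq n] (A : Matrix n n ℝ)
    (e : m ≃ n) (i : m) :
    nullity (delRC (A.submatrix e e) i) = nullity (delRC A (e i)) :=
  nullity_submatrix_equiv (delRC A (e i)) (e.subtypeEquiv fun _ => e.injective.ne_iff.symm)

end Nullity

lemma HasSNIP.submatrix_equiv {m n : Type*} [Fintype m] [Fintype n] {A : Matrix n n ℝ}
    {i : m} (e : m ≃ n) (h : HasSNIP A (e i)) : HasSNIP (A.submatrix e e) i := by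
  intro X hXs hhad hdiag hrow
  have hX : X.submatrix e.symm e.symm = 0 := by
    refine h _ (hXs.submatrix _) (fun j k => by simpa using hhad (e.symm j) (e.symm k))
      (fun j => hdiag _) fun j k hj => ?_
    have hmul : A.submatrix e e * X = (A * X.submatrix e.symm e.symm).submatrix e e := by
      rw [← submatrix_mul_equiv _ _ _ e, submatrix_submatrix]
      simp
    simpa [hmul] using hrow (e.symm j) (e.symm k) (by simpa [e.symm_apply_eq] using hj)
  simpa using congrArg (Matrix.submatrix · e e) hX

lemma hasSNIP_submatrix_equiv_iff {m n : Type*} [Fintype m] [Fintype n] {A : Matrix n n ℝ}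
    {i : m} (e : m ≃ n) : HasSNIP (A.submatrix e e) i ↔ HasSNIP A (e i) := by
  refine ⟨fun h => ?_, HasSNIP.submatrix_equiv e⟩
  simpa using HasSNIP.submatrix_equiv (A := A.submatrix e e) (i := e i) e.symm (by simpa using h)

lemma mul_apply_eq_of_rows_eq_zero {l m n : Type*} [Fintype m] {Q : Matrix m n ℝ} {i : m}
    (hQ : ∀ j ≠ i, Q j = 0) (N : Matrix l m ℝ) (a : l) (b : n) :
    (N * Q) a b = N a i * Q i b := by
  rw [Matrix.mul_apply, Finset.sum_eq_single i (fun j _ hj => by simp [hQ j hj]) (by simp)]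

lemma mul_row_eq_zero {l m n : Type*} [Fintype l] {Q : Matrix m l ℝ} {j : m} (hQ : Q j = 0)
    (N : Matrix l n ℝ) : (Q * N) j = 0 := by
  ext k
  simp [Matrix.mul_apply, hQ]

lemma InS.comap {α β : Type*} {G : SimpleGraph α} {A : Matrix α α ℝ} (hA : InS G A)
    {f : β → α} (hf : Function.Injective f) : InS (G.comap f) (A.submatrix f f) :=
  ⟨hA.1.submatrix f, fun _ _ hjk => hA.2 _ _ (hf.ne hjk)⟩

lemma InS.add_single {α : Type*} [DecidableEq α] {G : SimpleGraph α} {A : Matrix α α ℝ}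
    (hA : InS G A) (i : α) (c : ℝ) : InS G (A + single i i c) := by
  refine ⟨hA.1.add (transpose_single i i c), fun j k hjk => ?_⟩
  rw [Matrix.add_apply, single_apply_of_ne _ _ _ _ _ fun h => hjk (h.1.symm.trans h.2), add_zero]
  exact hA.2 j k hjk

lemma delRC_add_single {α : Type*} [DecidableEq α] (A : Matrix α α ℝ) (i : α) (c : ℝ) :
    delRC (A + single i i c) i = delRC A i := by
  ext a b
  simp [delRC, single_apply_of_row_ne (Ne.symm a.2)]

lemma exists_inS_isUnit_det_submatrix {α β : Type*} [Fintype β] [DecidableEq β]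
    (G : SimpleGraph α) {f : β → α} (hf : Function.Injective f) :
    ∃ B : Matrix α α ℝ, InS G B ∧ IsUnit (B.submatrix f f).det := by
  classical
  set C := (G.adjMatrix ℝ).submatrix f f
  obtain ⟨t, ht⟩ := Infinite.exists_notMem_finset C.charpoly.roots.toFinset
  refine ⟨diagonal (fun _ => t) - G.adjMatrix ℝ,
    ⟨(isSymm_diagonal _).sub G.isSymm_adjMatrix, fun j k hjk => ?_⟩, ?_⟩
  · by_cases h : G.Adj j k <;> simp [hjk, h]
  · have hB : (diagonal (fun _ => t) - G.adjMatrix ℝ).submatrix f f =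
        scalar β t - C := by
      ext a b
      by_cases hab : a = b <;> simp [C, hab, hf.ne]
    rw [hB, ← eval_charpoly, isUnit_iff_ne_zero]
    simpa [Polynomial.mem_roots, C.charpoly_monic.ne_zero] using ht

lemma mul_mul_transpose_eq_single {m n : Type*} [Fintype n] [DecidableEq m] {Q : Matrix m n ℝ}
    {i : m} (hQ : ∀ j ≠ i, Q j = 0) (N : Matrix n n ℝ) :
    Q * N * Qᵀ = single i i ((Q * N * Qᵀ) i i) := by
  ext j k
  by_cases hjk : i = j ∧ i = k
  · obtain ⟨rfl, rfl⟩ := hjk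
    simp
  rw [single_apply_of_ne _ _ _ _ _ hjk]
  rcases not_and_or.mp hjk with hj | hk
  · simp [mul_row_eq_zero (mul_row_eq_zero (hQ j (Ne.symm hj)) N)]
  · rw [Matrix.mul_apply]
    simp [hQ k (Ne.symm hk)]

lemma sub_single_apply_mul_apply {m : Type*} [DecidableEq m] {P X : Matrix m m ℝ} {i : m}
    (hX : X i i = 0) (c : ℝ) (j k : m) :
    (P - single i i c) j k * X j k = P j k * X j k := by
  rw [Matrix.sub_apply, single_apply]
  split_ifs with h
  · obtain ⟨rfl, rfl⟩ := h
    simp [hX]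
  · simp

section Blocks

variable {m n : Type*} [Fintype m] [Fintype n] [DecidableEq m] [DecidableEq n]
  {P : Matrix m m ℝ} {Q : Matrix m n ℝ} {S : Matrix n n ℝ} {i : m}

lemma eq_neg_inv_mul_of_add_mul_eq_zero {l : Type*} {B X : Matrix n l ℝ} (hS : IsUnit S.det)
    (h : B + S * X = 0) : X = -(S⁻¹ * B) := by
  rw [← nonsing_inv_mul_cancel_left S X hS, eq_neg_of_add_eq_zero_right h, Matrix.mul_neg]

lemma hasSNIP_fromBlocks_of_hasSNIP_schur (hS : IsUnit S.det) (hQ : ∀ j ≠ i, Q j = 0)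
    (h : HasSNIP (P - Q * S⁻¹ * Qᵀ) i) :
    HasSNIP (fromBlocks P Q Qᵀ S) (Sum.inl i) := by
  intro X hXs hhad hdiag hrow
  obtain ⟨X₁₁, X₁₂, X₂₁, X₂₂, rfl⟩ : ∃ a b c d, X = fromBlocks a b c d :=
    ⟨_, _, _, _, (fromBlocks_toBlocks X).symm⟩
  rw [IsSymm, fromBlocks_transpose, fromBlocks_inj] at hXs
  obtain ⟨h₁₁, h₁₂, -, -⟩ := hXs
  rw [fromBlocks_multiply] at hrow
  have hX₂₁ : X₂₁ = -(S⁻¹ * (Qᵀ * X₁₁)) := by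
    refine eq_neg_inv_mul_of_add_mul_eq_zero hS (ext fun a k => ?_)
    simpa using hrow (.inr a) (.inl k) Sum.inr_ne_inl
  have hX₂₂ : X₂₂ = -(S⁻¹ * (Qᵀ * X₁₂)) := by
    refine eq_neg_inv_mul_of_add_mul_eq_zero hS (ext fun a b => ?_)
    simpa using hrow (.inr a) (.inr b) Sum.inr_ne_inl
  have hschur : (P - Q * S⁻¹ * Qᵀ) * X₁₁ = P * X₁₁ + Q * X₂₁ := by
    rw [hX₂₁, Matrix.sub_mul, Matrix.mul_neg, sub_eq_add_neg, Matrix.mul_assoc,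
      Matrix.mul_assoc]
  have hX₁₁ : X₁₁ = 0 := h X₁₁ h₁₁
    (fun j k => by
      rw [mul_mul_transpose_eq_single hQ,
        sub_single_apply_mul_apply (X := X₁₁) (hdiag (.inl i))]
      exact hhad (.inl j) (.inl k))
    (fun j => hdiag (.inl j))
    (fun j k hj => by simpa [hschur] using hrow (.inl j) (.inl k) (by simpa using hj))
  have hX₁₂ : X₁₂ = 0 := by rw [← h₁₂, hX₂₁, hX₁₁]; simp
  simp [hX₁₁, hX₁₂, hX₂₁, hX₂₂]

lemma hasSNIP_schur_of_hasSNIP_fromBlocks (hS : IsUnit S.det) (hSs : S.IsSymm)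
    (hQ : ∀ j ≠ i, Q j = 0) (h : HasSNIP (fromBlocks P Q Qᵀ S) (Sum.inl i)) :
    HasSNIP (P - Q * S⁻¹ * Qᵀ) i := by
  intro X hXs hhad hdiag hrow
  -- `Y` makes the second block row of `fromBlocks P Q Qᵀ S * fromBlocks X Y Yᵀ 0` vanish.
  set Y := -(X * Q * S⁻¹) with hY
  have hYt : Yᵀ = -(S⁻¹ * (Qᵀ * X)) := by
    simp [hY, transpose_mul, transpose_nonsing_inv, hSs.eq, hXs.eq, Matrix.mul_assoc]
  have hYi : Y i = 0 := by
    have hXQ : (X * Q) i = 0 := by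
      ext b; rw [mul_apply_eq_of_rows_eq_zero hQ, hdiag, zero_mul]; rfl
    show -((X * Q * S⁻¹) i) = 0
    rw [mul_row_eq_zero hXQ, neg_zero]
  have hQY : ∀ j a b, Q j a * Y j b = 0 := by
    intro j a b
    by_cases hj : j = i
    · simp [hj, hYi]
    · simp [hQ j hj]
  have hPX : ∀ j ≠ i, (P * X) j = 0 := by
    intro j hj
    have : P * X = (P - Q * S⁻¹ * Qᵀ) * X + Q * (S⁻¹ * Qᵀ * X) := by
      rw [Matrix.sub_mul, Matrix.mul_assoc Q, Matrix.mul_assoc Q, sub_add_cancel]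
    ext k
    rw [this, Matrix.add_apply, hrow j k hj, mul_row_eq_zero (hQ j hj)]
    simp
  have hX := h (fromBlocks X Y Yᵀ 0) ?symm ?had ?diag ?rows
  · rw [← fromBlocks_zero, fromBlocks_inj] at hX
    exact hX.1
  case symm =>
    rw [IsSymm, fromBlocks_transpose, transpose_transpose, hXs.eq, transpose_zero]
  case had =>
    rintro (j | a) (k | b)
    · have := hhad j k
      rwa [mul_mul_transpose_eq_single hQ, sub_single_apply_mul_apply (hdiag i)] at this
    · exact hQY j b b
    · exact hQY k a a
    · simp
  case diag =>
    rintro (j | a)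
    · exact hdiag j
    · rfl
  case rows =>
    rw [fromBlocks_multiply]
    rintro (j | a) (k | b) hj
    · have hschur : P * X + Q * Yᵀ = (P - Q * S⁻¹ * Qᵀ) * X := by
        rw [hYt, Matrix.sub_mul, Matrix.mul_neg, ← sub_eq_add_neg, Matrix.mul_assoc,
          Matrix.mul_assoc]
      rw [fromBlocks_apply₁₁, hschur]
      exact hrow j k (by simpa using hj)
    · have hPY : P * Y = -(P * X * Q * S⁻¹) := by simp [hY, Matrix.mul_assoc]
      simp [hPY, mul_row_eq_zero (mul_row_eq_zero (hPX j (by simpa using hj)) Q)]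
    · rw [fromBlocks_apply₂₁, hYt, Matrix.mul_neg, mul_nonsing_inv_cancel_left _ _ hS,
        add_neg_cancel]
      rfl
    · simp [Matrix.mul_apply, hQY]

lemma exists_mulVec_apply_eq_zero_of_det_delRC_eq_zero (h : (delRC P i).det = 0) :
    ∃ u : m → ℝ, u ≠ 0 ∧ u i = 0 ∧ ∀ j ≠ i, (P *ᵥ u) j = 0 := by
  obtain ⟨w, hw, hPw⟩ := exists_mulVec_eq_zero_iff.mpr h
  refine ⟨fun j => if hj : j = i then 0 else w ⟨j, hj⟩, fun hu => hw ?_, by simp,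
    fun j hj => ?_⟩
  · ext a
    simpa [a.2] using congrFun hu a.1
  · rw [mulVec, dotProduct, Fintype.sum_eq_add_sum_subtype_ne _ i]
    simpa [mulVec, dotProduct, delRC, fun a : {a // a ≠ i} => a.2] using congrFun hPw ⟨j, hj⟩

lemma isUnit_det_delRC_or_isUnit_det_of_hasSNIP (hQ : ∀ j ≠ i, Q j = 0)
    (h : HasSNIP (fromBlocks P Q Qᵀ S) (Sum.inl i)) :
    IsUnit (delRC P i).det ∨ IsUnit S.det := by
  by_contra! hc
  simp only [isUnit_iff_ne_zero, not_not] at hc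
  obtain ⟨u, hu, hui, hPu⟩ := exists_mulVec_apply_eq_zero_of_det_delRC_eq_zero hc.1
  obtain ⟨v, hv, hSv⟩ := exists_mulVec_eq_zero_iff.mpr hc.2
  have hQu : ∀ j a, Q j a * u j = 0 := by
    intro j a
    by_cases hj : j = i
    · simp [hj, hui]
    · simp [hQ j hj]
  have hX := h (fromBlocks 0 (vecMulVec u v) (vecMulVec v u) 0) ?symm ?had ?diag ?rows
  · rw [← fromBlocks_zero, fromBlocks_inj] at hX
    obtain ⟨a, ha⟩ := Function.ne_iff.mp hu
    obtain ⟨b, hb⟩ := Function.ne_iff.mp hv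
    exact mul_ne_zero ha hb (congrFun (congrFun hX.2.1 a) b)
  case symm =>
    simp [IsSymm, fromBlocks_transpose, transpose_vecMulVec]
  case had =>
    rintro (j | a) (k | b)
    · simp
    · simp [vecMulVec_apply, ← mul_assoc, hQu]
    · simp [vecMulVec_apply, mul_left_comm _ (v a), hQu]
    · simp
  case diag =>
    rintro (j | a) <;> rfl
  case rows =>
    rw [fromBlocks_multiply]
    rintro (j | a) (k | b) hj
    · simp [Matrix.mul_vecMulVec, vecMulVec_apply, mulVec, hQ j (by simpa using hj)]
    · simp [Matrix.mul_vecMulVec, vecMulVec_apply, hPu j (by simpa using hj)]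
    · simp [Matrix.mul_vecMulVec, hSv]
    · simp [Matrix.mul_vecMulVec, vecMulVec_apply, mulVec, dotProduct, hQu]

lemma nullity_delRC_fromBlocks (hQ : ∀ j ≠ i, Q j = 0) (hS : IsUnit S.det) :
    nullity (delRC (fromBlocks P Q Qᵀ S) (Sum.inl i)) = nullity (delRC P i) := by
  let e : {j // j ≠ i} ⊕ n ≃ {x : m ⊕ n // x ≠ Sum.inl i} :=
    (Equiv.sumCongr (Equiv.subtypeEquivRight fun _ => Sum.inl_injective.ne_iff.symm)
      (Equiv.subtypeUnivEquiv fun (b : n) => (Sum.inr_ne_inl : Sum.inr b ≠ Sum.inl i)).symm).trans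
      (Equiv.subtypeSum (p := (· ≠ Sum.inl i))).symm
  have hblocks : (delRC (fromBlocks P Q Qᵀ S) (Sum.inl i)).submatrix e e =
      fromBlocks (delRC P i) 0 0 S := by
    ext (a | b) (a' | b')
    · rfl
    · exact congrFun (hQ a a.2) b'
    · exact congrFun (hQ a' a'.2) b
    · rfl
  rw [← nullity_submatrix_equiv _ e, hblocks, nullity_fromBlocks_zero,
    nullity_eq_zero_of_isUnit_det hS, add_zero]

end Blocks

structure IsVertexSum {α : Type*} [DecidableEq α] (G : SimpleGraph α) (i : α)
    (V₁ V₂ : Finset α) : Prop where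
  mem_left : i ∈ V₁
  mem_right : i ∈ V₂
  mem_or_mem : ∀ x, x ∈ V₁ ∨ x ∈ V₂
  inter_eq : V₁ ∩ V₂ = {i}
  adj : ∀ x y, G.Adj x y → (x ∈ V₁ ∧ y ∈ V₁) ∨ (x ∈ V₂ ∧ y ∈ V₂)

namespace IsVertexSum

variable {α : Type*} [DecidableEq α] {G : SimpleGraph α} {i : α} {V₁ V₂ : Finset α}

lemma symm (h : IsVertexSum G i V₁ V₂) : IsVertexSum G i V₂ V₁ :=
  ⟨h.mem_right, h.mem_left, fun x => (h.mem_or_mem x).symm, by rw [Finset.inter_comm, h.inter_eq],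
    fun x y hxy => (h.adj x y hxy).symm⟩

lemma eq_of_mem_of_mem (h : IsVertexSum G i V₁ V₂) {x : α} (hx₁ : x ∈ V₁)
    (hx₂ : x ∈ V₂) : x = i :=
  Finset.mem_singleton.mp (h.inter_eq ▸ Finset.mem_inter.mpr ⟨hx₁, hx₂⟩)

lemma apply_eq_zero (h : IsVertexSum G i V₁ V₂) {A : Matrix α α ℝ} (hA : InS G A) {x y : α}
    (hx : x ∈ V₁) (hy : y ∈ V₂) (hxi : x ≠ i) (hyi : y ≠ i) : A x y = 0 := by
  by_contra hne
  have hxy : x ≠ y := fun hxy => hxi (h.eq_of_mem_of_mem hx (hxy ▸ hy))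
  rcases h.adj x y ((hA.2 x y hxy).mp hne) with ⟨-, hy₁⟩ | ⟨hx₂, -⟩
  · exact hyi (h.eq_of_mem_of_mem hy₁ hy)
  · exact hxi (h.eq_of_mem_of_mem hx hx₂)

lemma val_val_notMem_left (h : IsVertexSum G i V₁ V₂)
    (b : {b : V₂ // b ≠ ⟨i, h.mem_right⟩}) : b.1.1 ∉ V₁ :=
  fun hb => b.2 (Subtype.ext (h.eq_of_mem_of_mem hb b.1.2))

noncomputable def sumEquiv (h : IsVertexSum G i V₁ V₂) :
    V₁ ⊕ {b : V₂ // b ≠ ⟨i, h.mem_right⟩} ≃ α :=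
  Equiv.ofBijective (Sum.elim Subtype.val fun b => b.1.1) <| by
    refine ⟨?_, fun x => ?_⟩
    · rintro (a | b) (a' | b') hab
      · exact congrArg Sum.inl (Subtype.ext hab)
      · exact absurd ((show a.1 = b'.1.1 from hab) ▸ a.2) (h.val_val_notMem_left b')
      · exact absurd ((show a'.1 = b.1.1 from hab.symm) ▸ a'.2) (h.val_val_notMem_left b)
      · exact congrArg Sum.inr (Subtype.ext (Subtype.ext hab))
    · by_cases hx : x ∈ V₁
      · exact ⟨.inl ⟨x, hx⟩, rfl⟩
      · refine ⟨.inr ⟨⟨x, (h.mem_or_mem x).resolve_left hx⟩, fun hxi => hx ?_⟩, rfl⟩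
        rw [show x = i from congrArg Subtype.val hxi]
        exact h.mem_left

@[simp]
lemma sumEquiv_inl (h : IsVertexSum G i V₁ V₂) (a : V₁) : h.sumEquiv (.inl a) = a := rfl

@[simp]
lemma sumEquiv_inr (h : IsVertexSum G i V₁ V₂) (b : {b : V₂ // b ≠ ⟨i, h.mem_right⟩}) :
    h.sumEquiv (.inr b) = b.1.1 := rfl

lemma submatrix_equiv_eq_fromBlocks (h : IsVertexSum G i V₁ V₂) {A : Matrix α α ℝ}
    (hA : A.IsSymm) :
    A.submatrix h.sumEquiv h.sumEquiv = fromBlocks (A.submatrix (↑) (↑))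
      (A.submatrix (↑) (h.sumEquiv ∘ Sum.inr)) (A.submatrix (↑) (h.sumEquiv ∘ Sum.inr))ᵀ
      (delRC (A.submatrix ((↑) : V₂ → α) (↑)) ⟨i, h.mem_right⟩) := by
  ext (a | b) (a' | b')
  · rfl
  · rfl
  · exact hA.apply _ _
  · rfl

lemma cross_row_eq_zero (h : IsVertexSum G i V₁ V₂) {A : Matrix α α ℝ} (hA : InS G A) :
    ∀ j ≠ (⟨i, h.mem_left⟩ : V₁), A.submatrix (↑) (h.sumEquiv ∘ Sum.inr) j = 0 :=
  fun j hj => funext fun b => h.apply_eq_zero hA j.2 b.1.2 (fun hji => hj (Subtype.ext hji))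
    (fun hbi => b.2 (Subtype.ext hbi))

end IsVertexSum

def AllowsSNIP (G : SimpleGraph V) (i : V) (k ℓ : ℕ) : Prop :=
  ∃ A : Matrix V V ℝ, InS G A ∧ HasSNIP A i ∧ nullity A = k ∧ nullity (delRC A i) = ℓ

namespace IsVertexSum

variable {α : Type*} [Fintype α] [DecidableEq α] {G : SimpleGraph α} {i : α}
  {V₁ V₂ : Finset α}

lemma isUnit_det_or_isUnit_det (h : IsVertexSum G i V₁ V₂) {A : Matrix α α ℝ} (hA : InS G A)
    (hsnip : HasSNIP A i) :
    IsUnit (delRC (A.submatrix ((↑) : V₁ → α) (↑)) ⟨i, h.mem_left⟩).det ∨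
      IsUnit (delRC (A.submatrix ((↑) : V₂ → α) (↑)) ⟨i, h.mem_right⟩).det :=
  isUnit_det_delRC_or_isUnit_det_of_hasSNIP (h.cross_row_eq_zero hA)
    (h.submatrix_equiv_eq_fromBlocks hA.1 ▸ (hasSNIP_submatrix_equiv_iff h.sumEquiv).mpr hsnip)

lemma allowsSNIP_left_of_isUnit_det (h : IsVertexSum G i V₁ V₂) {A : Matrix α α ℝ}
    (hA : InS G A) (hsnip : HasSNIP A i)
    (hS : IsUnit (delRC (A.submatrix ((↑) : V₂ → α) (↑)) ⟨i, h.mem_right⟩).det) :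
    AllowsSNIP (G.comap ((↑) : V₁ → α)) ⟨i, h.mem_left⟩ (nullity A)
      (nullity (delRC A i)) := by
  have hQ := h.cross_row_eq_zero hA
  have hM := h.submatrix_equiv_eq_fromBlocks hA.1
  have hsnipM := (hasSNIP_submatrix_equiv_iff h.sumEquiv (i := .inl ⟨i, h.mem_left⟩)).mpr hsnip
  rw [hM] at hsnipM
  refine ⟨_, ?_,
    hasSNIP_schur_of_hasSNIP_fromBlocks hS ((hA.1.submatrix _).submatrix _) hQ hsnipM, ?_, ?_⟩
  · rw [mul_mul_transpose_eq_single hQ, sub_eq_add_neg, single_neg]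
    exact (hA.comap Subtype.val_injective).add_single _ _
  · rw [← nullity_fromBlocks_eq_nullity_schur _ _ _ hS, ← hM, nullity_submatrix_equiv]
  · rw [mul_mul_transpose_eq_single hQ, sub_eq_add_neg, single_neg, delRC_add_single,
      ← nullity_delRC_fromBlocks hQ hS, ← hM, nullity_delRC_submatrix_equiv]
    rfl

lemma allowsSNIP_of_allowsSNIP_left (h : IsVertexSum G i V₁ V₂) {k ℓ : ℕ}
    (h₁ : AllowsSNIP (G.comap ((↑) : V₁ → α)) ⟨i, h.mem_left⟩ k ℓ) :
    AllowsSNIP G i k ℓ := by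
  obtain ⟨A₁, hA₁, hsnip₁, rfl, rfl⟩ := h₁
  obtain ⟨B, hB, hS⟩ :=
    exists_inS_isUnit_det_submatrix G (h.sumEquiv.injective.comp Sum.inr_injective)
  have hQ := h.cross_row_eq_zero hB
  set Q := B.submatrix ((↑) : V₁ → α) (h.sumEquiv ∘ Sum.inr)
  set S := B.submatrix (h.sumEquiv ∘ Sum.inr) (h.sumEquiv ∘ Sum.inr)
  set P := A₁ + Q * S⁻¹ * Qᵀ with hPdef
  have hP : InS (G.comap (↑)) P := by
    rw [hPdef, mul_mul_transpose_eq_single hQ]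
    exact hA₁.add_single _ _
  let A : Matrix α α ℝ := Matrix.of fun x y =>
    if hxy : x ∈ V₁ ∧ y ∈ V₁ then P ⟨x, hxy.1⟩ ⟨y, hxy.2⟩ else B x y
  have hA : InS G A := by
    refine ⟨IsSymm.ext fun x y => ?_, fun x y hxy => ?_⟩
    · by_cases hx : x ∈ V₁ <;> by_cases hy : y ∈ V₁ <;>
        simp [A, hx, hy, hP.1.apply, hB.1.apply]
    · by_cases hxy' : x ∈ V₁ ∧ y ∈ V₁
      · simpa [A, hxy'] using hP.2 ⟨x, hxy'.1⟩ ⟨y, hxy'.2⟩ (by simpa using hxy)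
      · simpa [A, hxy'] using hB.2 x y hxy
  have hM : A.submatrix h.sumEquiv h.sumEquiv = fromBlocks P Q Qᵀ S := by
    ext (a | b) (a' | b')
    · simp [A, a.2, a'.2]
    · simp [A, Q, h.val_val_notMem_left b']
    · simp [A, Q, h.val_val_notMem_left b, hB.1.apply]
    · simp [A, S, h.val_val_notMem_left b]
  have hschur : P - Q * S⁻¹ * Qᵀ = A₁ := add_sub_cancel_right _ _
  refine ⟨A, hA, ?_, ?_, ?_⟩
  · refine (hasSNIP_submatrix_equiv_iff h.sumEquiv (i := .inl ⟨i, h.mem_left⟩)).mp ?_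
    rw [hM]
    exact hasSNIP_fromBlocks_of_hasSNIP_schur hS hQ (hschur ▸ hsnip₁)
  · rw [← nullity_submatrix_equiv A h.sumEquiv, hM, nullity_fromBlocks_eq_nullity_schur _ _ _ hS,
      hschur]
  · calc nullity (delRC A i)
        = nullity (delRC (A.submatrix h.sumEquiv h.sumEquiv) (.inl ⟨i, h.mem_left⟩)) :=
          (nullity_delRC_submatrix_equiv A h.sumEquiv (.inl ⟨i, h.mem_left⟩)).symm
      _ = nullity (delRC A₁ ⟨i, h.mem_left⟩) := by
          rw [hM, nullity_delRC_fromBlocks hQ hS, hPdef, mul_mul_transpose_eq_single hQ,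
            delRC_add_single]

lemma allowsSNIP_iff (h : IsVertexSum G i V₁ V₂) {k ℓ : ℕ} :
    AllowsSNIP G i k ℓ ↔
      AllowsSNIP (G.comap ((↑) : V₁ → α)) ⟨i, h.mem_left⟩ k ℓ ∨
      AllowsSNIP (G.comap ((↑) : V₂ → α)) ⟨i, h.mem_right⟩ k ℓ := by
  refine ⟨?_, fun h' => h'.elim h.allowsSNIP_of_allowsSNIP_left
    h.symm.allowsSNIP_of_allowsSNIP_left⟩
  rintro ⟨A, hA, hsnip, rfl, rfl⟩
  exact (h.isUnit_det_or_isUnit_det hA hsnip).symm.imp (h.allowsSNIP_left_of_isUnit_det hA hsnip)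
    (h.symm.allowsSNIP_left_of_isUnit_det hA hsnip)

end IsVertexSum

def snipSums (G : SimpleGraph V) (i : V) : Set ℕ :=
  {s | ∃ k ℓ : ℕ, k ≤ ℓ ∧ s = k + ℓ ∧ AllowsSNIP G i k ℓ}

lemma xixi_eq_sSup_snipSums (G : SimpleGraph V) (i : V) : xixi G i = sSup (snipSums G i) := rfl

lemma bddAbove_snipSums (G : SimpleGraph V) (i : V) : BddAbove (snipSums G i) := by
  refine ⟨2 * Fintype.card V, ?_⟩
  rintro s ⟨k, ℓ, -, rfl, A, -, -, rfl, rfl⟩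
  have h₁ := nullity_le_card A
  have h₂ := (nullity_le_card (delRC A i)).trans (Fintype.card_subtype_le _)
  omega

lemma IsVertexSum.snipSums_eq {G : SimpleGraph V} {i : V} {V₁ V₂ : Finset V}
    (h : IsVertexSum G i V₁ V₂) :
    snipSums G i = snipSums (G.comap ((↑) : V₁ → V)) ⟨i, h.mem_left⟩ ∪
      snipSums (G.comap ((↑) : V₂ → V)) ⟨i, h.mem_right⟩ := by
  ext s
  simp only [snipSums, Set.mem_ofPred_eq, Set.mem_union, h.allowsSNIP_iff, and_or_left,
    exists_or]

theorem stmt10_general (G : SimpleGraph V) (i : V) (V₁ V₂ : Finset V)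
    (hi1 : i ∈ V₁) (hi2 : i ∈ V₂)
    (hunion : ∀ x, x ∈ V₁ ∨ x ∈ V₂)
    (hinter : V₁ ∩ V₂ = {i})
    (hedges : ∀ x y, G.Adj x y → (x ∈ V₁ ∧ y ∈ V₁) ∨ (x ∈ V₂ ∧ y ∈ V₂)) :
    xixi G i = max (xixi (G.comap (Subtype.val : {x // x ∈ V₁} → V)) ⟨i, hi1⟩)
      (xixi (G.comap (Subtype.val : {x // x ∈ V₂} → V)) ⟨i, hi2⟩) := by
  have h : IsVertexSum G i V₁ V₂ := ⟨hi1, hi2, hunion, hinter, hedges⟩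
  rw [xixi_eq_sSup_snipSums, xixi_eq_sSup_snipSums, xixi_eq_sSup_snipSums, h.snipSums_eq,
    csSup_union' (bddAbove_snipSums _ _) (bddAbove_snipSums _ _)]

theorem stmt10 (G : SimpleGraph V) (i : V) (V₁ V₂ : Finset V)
    (hi1 : i ∈ V₁) (hi2 : i ∈ V₂)
    (hunion : ∀ x, x ∈ V₁ ∨ x ∈ V₂)
    (hinter : V₁ ∩ V₂ = {i})
    (hedges : ∀ x y, G.Adj x y → (x ∈ V₁ ∧ y ∈ V₁) ∨ (x ∈ V₂ ∧ y ∈ V₂))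
    (hconn1 : (G.comap (Subtype.val : {x // x ∈ V₁} → V)).Connected)
    (hconn2 : (G.comap (Subtype.val : {x // x ∈ V₂} → V)).Connected)
    (hcard1 : 2 ≤ V₁.card) (hcard2 : 2 ≤ V₂.card) :
    xixi G i = max (xixi (G.comap (Subtype.val : {x // x ∈ V₁} → V)) ⟨i, hi1⟩)
      (xixi (G.comap (Subtype.val : {x // x ∈ V₂} → V)) ⟨i, hi2⟩) :=
  stmt10_general G i V₁ V₂ hi1 hi2 hunion hinter hedges
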